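/- arXiv:2007.12889 — 3 statements merged into one kernel-verified Lean document; each statement's English description precedes it below -/
import Mathlib

section
/- If Λ : ℝ → ℝ is totally positive, not almost everywhere zero, and not of the form Λ(x) = e^{ax+b} for constants a, b ∈ ℝ, then there exists a real constant c such that the function Λ₁(x) = e^{cx} Λ(x) is a Pólya frequency function (i.e. Λ₁ is totally positive and integrable). -/
/-
A totally positive `Λ` is nonnegative, and its `2 × 2` minors say that of two pairs of points with
the same midpoint the closer pair has the larger product (log-concavity). Together with
measurability this forces `Λ` to be locally bounded. The slopes of `log Λ` decrease along the
support, which gives bounds `Λ t ≤ C e^{κ t}` at both ends. If the slope drops strictly somewhere,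
or the support is bounded on one side, some tilt `e^{c t} Λ t` decays exponentially at both ends
and is integrable; otherwise `log Λ` is a measurable additive function plus a constant, hence
affine, and `Λ` is an exponential. Tilting multiplies every kernel matrix by positive diagonal
matrices, so it preserves total positivity.
-/

open MeasureTheory Complex

/-- A measurable function `Λ : ℝ → ℝ` is totally positive if every matrix
`(Λ (x j - y k))` built from increasing nodes has nonnegative determinant. -/
def TotallyPositive (Λ : ℝ → ℝ) : Prop :=
  Measurable Λ ∧ ∀ (n : ℕ) (x y : Fin n → ℝ), StrictMono x → StrictMono y →
    0 ≤ (Matrix.of fun j k => Λ (x j - y k)).det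

/-- A Pólya frequency function: totally positive, integrable, not a.e. zero. -/
def PolyaFrequency (Λ : ℝ → ℝ) : Prop :=
  TotallyPositive Λ ∧ Integrable Λ ∧ ¬ (∀ᵐ x : ℝ, Λ x = 0)

/-- The Laguerre–Pólya class. -/
def LaguerrePolya (Ψ : ℂ → ℂ) : Prop :=
  ∃ (C δ γ : ℝ) (m : ℕ) (d : ℕ → ℝ),
    C ≠ 0 ∧ 0 ≤ γ ∧ Summable (fun j => (d j) ^ 2) ∧ 0 < γ + ∑' j, (d j) ^ 2 ∧
    (∀ s : ℂ, Multipliable (fun j => (1 + (d j : ℂ) * s) * Complex.exp (-(d j : ℂ) * s))) ∧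
    ∀ s : ℂ, Ψ s = (C : ℂ) * s ^ m * Complex.exp (-(γ : ℂ) * s ^ 2 + (δ : ℂ) * s) *
      ∏' j, ((1 + (d j : ℂ) * s) * Complex.exp (-(d j : ℂ) * s))

open Filter Topology Set Metric Asymptotics

theorem IsCompact.bddAbove_image_of_isBoundedUnder {X α : Type*} [TopologicalSpace X]
    [Preorder α] [IsDirectedOrder α] [Nonempty α] {f : X → α} {K : Set X} (hK : IsCompact K)
    (hf : ∀ x ∈ K, (𝓝 x).IsBoundedUnder (· ≤ ·) f) : BddAbove (f '' K) := by
  refine hK.induction_on (by simp) (fun s t hst ht => ht.mono (image_mono hst))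
    (fun s t hs ht => by simpa only [image_union] using hs.union ht) fun x hx => ?_
  obtain ⟨M, hM⟩ := hf x hx
  exact ⟨_, mem_nhdsWithin_of_mem_nhds hM, M, by rintro _ ⟨y, hy, rfl⟩; exact hy⟩

theorem exists_mem_and_two_mul_sub_mem {A : Set ℝ} (hA : MeasurableSet A) {s r : ℝ}
    (h : ENNReal.ofReal r < volume (A ∩ closedBall s r)) :
    ∃ p ∈ A, 2 * s - p ∈ A ∧ dist p s ≤ r := by
  have hr : 0 ≤ r := by
    by_contra hr
    rw [closedBall_eq_empty.2 (not_le.1 hr), inter_empty, measure_empty] at h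
    exact ENNReal.not_lt_zero h
  have hB : MeasurableSet (A ∩ closedBall s r) := hA.inter measurableSet_closedBall
  have hvol : volume ((2 * s - ·) ⁻¹' (A ∩ closedBall s r)) = volume (A ∩ closedBall s r) :=
    (Measure.measurePreserving_sub_left volume (2 * s)).measure_preimage hB.nullMeasurableSet
  have hsub : (2 * s - ·) ⁻¹' (A ∩ closedBall s r) ⊆ closedBall s r := fun p hp => by
    have hp' := hp.2
    rw [mem_closedBall, Real.dist_eq] at hp' ⊢
    rwa [show 2 * s - p - s = -(p - s) by ring, abs_neg] at hp'
  obtain ⟨p, hp, hp'⟩ := nonempty_inter_of_measure_lt_add volume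
    (s := A ∩ closedBall s r) ((measurable_const_sub (2 * s)) hB) inter_subset_right hsub (by
      rw [hvol, Real.volume_closedBall, two_mul, ENNReal.ofReal_add hr hr]
      exact ENNReal.add_lt_add h h)
  exact ⟨p, hp.1, hp'.1, hp.2⟩

theorem exists_lt_measure_setOf_le_natCast_inter {α : Type*} [MeasurableSpace α]
    {μ : Measure α} (f : α → ℝ) {B : Set α} {a : ENNReal} (ha : a < μ B) :
    ∃ n : ℕ, a < μ ({x | f x ≤ n} ∩ B) := by
  have hmono : Monotone fun n : ℕ => {x | f x ≤ n} ∩ B := fun m n hmn =>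
    inter_subset_inter_left _ fun x (hx : f x ≤ m) => hx.trans (by exact_mod_cast hmn)
  have hunion : ⋃ n : ℕ, {x | f x ≤ n} ∩ B = B := by
    rw [← iUnion_inter, inter_eq_right]
    exact fun x _ => mem_iUnion.2 (exists_nat_ge (f x))
  have hlim := tendsto_measure_iUnion_atTop (μ := μ) hmono
  rw [hunion] at hlim
  exact (hlim.eventually (lt_mem_nhds ha)).exists

theorem le_of_map_add_le {g : ℝ → ℝ} {v h C : ℝ} (hh : 0 < h)
    (hg : ∀ y, v ≤ y → g (y + h) ≤ g y) (hC : ∀ y ∈ Ico v (v + h), g y ≤ C) {t : ℝ}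
    (ht : v ≤ t) : g t ≤ C := by
  have key : ∀ n : ℕ, ∀ t, v ≤ t → t < v + (n + 1) * h → g t ≤ C := by
    intro n
    induction n with
    | zero => exact fun t ht ht' => hC t ⟨ht, by simpa using ht'⟩
    | succ n ih =>
      intro t ht ht'
      rcases lt_or_ge t (v + (n + 1) * h) with hlt | hge
      · exact ih t ht hlt
      · calc g t = g (t - h + h) := by rw [sub_add_cancel]
          _ ≤ g (t - h) := hg _ (by nlinarith)
          _ ≤ C := ih _ (by nlinarith) (by push_cast at ht'; linarith)
  obtain ⟨n, hn⟩ := exists_nat_gt ((t - v) / h)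
  exact key n t ht (by rw [div_lt_iff₀ hh] at hn; linarith)

theorem integrable_exp_mul_of_isBigO {f : ℝ → ℝ} (hf : LocallyIntegrable f) {c κ₁ κ₂ : ℝ}
    (h₁ : 0 < c + κ₁) (h₂ : c + κ₂ < 0) (hbot : f =O[atBot] fun t => Real.exp (κ₁ * t))
    (htop : f =O[atTop] fun t => Real.exp (κ₂ * t)) :
    Integrable fun t => Real.exp (c * t) * f t := by
  have hexp : ∀ κ t, Real.exp (c * t) * Real.exp (κ * t) = Real.exp ((c + κ) * t) :=
    fun κ t => by rw [← Real.exp_add, add_mul]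
  refine (hf.continuous_mul (by fun_prop)).integrable_of_isBigO_atBot_atTop
    (g := fun t => Real.exp ((c + κ₁) * t)) (g' := fun t => Real.exp ((c + κ₂) * t)) ?_
    ⟨Iic 0, Iic_mem_atBot 0, integrableOn_exp_mul_Iic h₁ 0⟩ ?_
    ⟨Ioi 0, Ioi_mem_atTop 0, integrableOn_exp_mul_Ioi h₂ 0⟩
  · simpa only [hexp] using (isBigO_refl (fun t => Real.exp (c * t)) atBot).mul hbot
  · simpa only [hexp] using (isBigO_refl (fun t => Real.exp (c * t)) atTop).mul htop

theorem exists_eq_exp_of_map_add_mul_map_zero {f : ℝ → ℝ} (hm : Measurable f)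
    (hpos : ∀ t, 0 < f t) (hf : ∀ a b, f (a + b) * f 0 = f a * f b) :
    ∃ a b : ℝ, ∀ x, f x = Real.exp (a * x + b) := by
  let G : ℝ →+ ℝ := AddMonoidHom.mk' (fun t => Real.log (f t) - Real.log (f 0)) fun a b => by
    have hlog := congrArg Real.log (hf a b)
    rw [Real.log_mul (hpos _).ne' (hpos _).ne', Real.log_mul (hpos _).ne' (hpos _).ne'] at hlog
    linarith
  have hG : Continuous G :=
    Measure.AddMonoidHom.continuous_of_measurable G (hm.log.sub measurable_const)
  refine ⟨G 1, Real.log (f 0), fun x => ?_⟩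
  have hx : G x = x * G 1 := by simpa using map_real_smul G hG x 1
  rw [mul_comm, ← hx]
  simp [G, Real.exp_log (hpos x)]

theorem exists_lt_ne_zero_of_not_ae_eq_zero {f : ℝ → ℝ} (hne : ¬ ∀ᵐ x, f x = 0) :
    ∃ u v, u < v ∧ f u ≠ 0 ∧ f v ≠ 0 := by
  have hsupp : ¬ {x | f x ≠ 0}.Subsingleton := fun hs => hne (ae_iff.2 (hs.measure_zero volume))
  obtain ⟨u, hu, v, hv, huv⟩ := Set.not_subsingleton_iff.1 hsupp
  rcases huv.lt_or_gt with h | h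
  · exact ⟨u, v, h, hu, hv⟩
  · exact ⟨v, u, h, hv, hu⟩

/-- The `1 × 1` and `2 × 2` minor conditions of `TotallyPositive`, the latter written for two
pairs of points with a common midpoint. -/
structure TotallyPositive₂ (Λ : ℝ → ℝ) : Prop where
  nonneg : ∀ t, 0 ≤ Λ t
  mul_le_mul : ∀ ⦃x y p q : ℝ⦄, p + q = x + y → |p - q| ≤ |x - y| → Λ x * Λ y ≤ Λ p * Λ q

namespace TotallyPositive

variable {Λ : ℝ → ℝ}

theorem nonneg (hΛ : TotallyPositive Λ) (t : ℝ) : 0 ≤ Λ t := by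
  simpa [Matrix.det_fin_one] using
    hΛ.2 1 ![t] ![0] (Subsingleton.strictMono _) (Subsingleton.strictMono _)

theorem mul_le_mul_of_lt (hΛ : TotallyPositive Λ) {x p q y : ℝ} (hxp : x < p) (hpq : p ≤ q)
    (hqy : q < y) (hs : p + q = x + y) : Λ x * Λ y ≤ Λ p * Λ q := by
  have hdet := hΛ.2 2 ![p, y] ![0, p - x] (by simp [Fin.strictMono_iff_lt_succ, hpq.trans_lt hqy])
    (by simp [Fin.strictMono_iff_lt_succ, hxp])
  simp only [Matrix.det_fin_two, Matrix.of_apply, Matrix.cons_val_zero, Matrix.cons_val_one,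
    sub_zero, sub_sub_cancel, show y - (p - x) = q by linarith] at hdet
  linarith

theorem totallyPositive₂ (hΛ : TotallyPositive Λ) : TotallyPositive₂ Λ where
  nonneg := hΛ.nonneg
  mul_le_mul := by
    intro x y p q hs hd
    wlog hxy : x ≤ y generalizing x y
    · rw [mul_comm]
      exact this (by linarith) (by rwa [abs_sub_comm y x]) (by linarith)
    wlog hpq : p ≤ q generalizing p q
    · rw [mul_comm (Λ p)]
      exact this (by linarith) (by rwa [abs_sub_comm q p]) (by linarith)
    rw [abs_of_nonpos (by linarith), abs_of_nonpos (by linarith)] at hd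
    rcases (show x ≤ p by linarith).eq_or_lt with rfl | hxp
    · rw [show q = y by linarith]
    · exact hΛ.mul_le_mul_of_lt hxp hpq (by linarith) hs

theorem exp_mul (hΛ : TotallyPositive Λ) (c : ℝ) :
    TotallyPositive fun x => Real.exp (c * x) * Λ x := by
  refine ⟨(Real.measurable_exp.comp (measurable_id.const_mul c)).mul hΛ.1, fun n x y hx hy => ?_⟩
  have hmat : (Matrix.of fun j k => Real.exp (c * (x j - y k)) * Λ (x j - y k)) =
      Matrix.diagonal (fun j => Real.exp (c * x j)) * Matrix.of (fun j k => Λ (x j - y k)) *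
        Matrix.diagonal (fun k => Real.exp (-(c * y k))) := by
    ext j k
    simp only [Matrix.mul_diagonal, Matrix.diagonal_mul, Matrix.of_apply]
    rw [show c * (x j - y k) = c * x j + -(c * y k) by ring, Real.exp_add]
    ring
  change 0 ≤ (Matrix.of fun j k => Real.exp (c * (x j - y k)) * Λ (x j - y k)).det
  rw [hmat, Matrix.det_mul, Matrix.det_mul, Matrix.det_diagonal, Matrix.det_diagonal]
  have hdet := hΛ.2 n x y hx hy
  positivity

end TotallyPositive

noncomputable def logSlope (Λ : ℝ → ℝ) (u v : ℝ) : ℝ := Real.log (Λ v / Λ u) / (v - u)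

theorem exp_logSlope_mul {Λ : ℝ → ℝ} {u v : ℝ} (hu : 0 < Λ u) (hv : 0 < Λ v) (huv : u ≠ v) :
    Real.exp (logSlope Λ u v * (v - u)) * Λ u = Λ v := by
  rw [logSlope, div_mul_cancel₀ _ (sub_ne_zero.2 huv.symm), Real.exp_log (div_pos hv hu),
    div_mul_cancel₀ _ hu.ne']

namespace TotallyPositive₂

variable {Λ : ℝ → ℝ}

theorem comp_neg (hΛ : TotallyPositive₂ Λ) : TotallyPositive₂ fun t => Λ (-t) where
  nonneg t := hΛ.nonneg (-t)
  mul_le_mul x y p q hs hd := hΛ.mul_le_mul (by linarith)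
    (by rwa [neg_sub_neg, neg_sub_neg, abs_sub_comm, abs_sub_comm y])

theorem pos_of_le_of_le (hΛ : TotallyPositive₂ Λ) {p m q : ℝ} (hp : 0 < Λ p) (hq : 0 < Λ q)
    (hpm : p ≤ m) (hmq : m ≤ q) : 0 < Λ m := by
  have hmul := hΛ.mul_le_mul (x := p) (y := q) (p := m) (q := p + q - m) (by ring) (by
    rw [abs_le, abs_sub_comm p q, abs_of_nonneg (by linarith : (0 : ℝ) ≤ q - p)]
    constructor <;> linarith)
  exact pos_of_mul_pos_left ((mul_pos hp hq).trans_le hmul) (hΛ.nonneg _)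

theorem pos_of_frequently (hΛ : TotallyPositive₂ Λ) (hbot : ∃ᶠ t in atBot, Λ t ≠ 0)
    (htop : ∃ᶠ t in atTop, Λ t ≠ 0) (x : ℝ) : 0 < Λ x := by
  obtain ⟨p, hpx, hp⟩ := frequently_atBot.1 hbot x
  obtain ⟨q, hxq, hq⟩ := frequently_atTop.1 htop x
  exact hΛ.pos_of_le_of_le ((hΛ.nonneg p).lt_of_ne' hp) ((hΛ.nonneg q).lt_of_ne' hq) hpx hxq

theorem mul_eq_mul_of_forall_le (hΛ : TotallyPositive₂ Λ)
    (h : ∀ x y p q : ℝ, p + q = x + y → |p - q| ≤ |x - y| → Λ p * Λ q ≤ Λ x * Λ y)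
    {x y p q : ℝ} (hs : p + q = x + y) : Λ x * Λ y = Λ p * Λ q := by
  rcases le_total |p - q| |x - y| with hd | hd
  · exact le_antisymm (hΛ.mul_le_mul hs hd) (h x y p q hs hd)
  · exact le_antisymm (h p q x y hs.symm hd) (hΛ.mul_le_mul hs.symm hd)

/-- For `t` near `t₀`, the pair `j, t` has the same midpoint as a much closer pair of points
of a sublevel set `{Λ ≤ n}`, which exists because `{Λ ≤ n}` fills most of that region. -/
theorem isBoundedUnder_nhds_of_pos (hΛ : TotallyPositive₂ Λ) (hm : Measurable Λ) {j t₀ : ℝ}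
    (hj : 0 < Λ j) (ht₀ : t₀ ≠ j) : (𝓝 t₀).IsBoundedUnder (· ≤ ·) Λ := by
  set l := |t₀ - j| / 8
  have hl : 0 < l := by have := abs_pos.2 (sub_ne_zero.2 ht₀); positivity
  set c₀ := (j + t₀) / 2
  obtain ⟨n, hn⟩ := exists_lt_measure_setOf_le_natCast_inter Λ (B := closedBall c₀ l)
    (a := ENNReal.ofReal (3 / 2 * l)) (by
      rw [Real.volume_closedBall, ENNReal.ofReal_lt_ofReal_iff (by positivity)]
      linarith)
  refine isBoundedUnder_of_eventually_le (a := n * n / Λ j)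
    (eventually_of_mem (closedBall_mem_nhds t₀ hl) fun t ht => ?_)
  rw [mem_closedBall, Real.dist_eq] at ht
  set s := (j + t) / 2
  have hs : dist s c₀ ≤ l / 2 := by
    rw [Real.dist_eq, show s - c₀ = (t - t₀) / 2 by ring, abs_div, abs_two]
    linarith
  obtain ⟨p, hp, hq, hps⟩ :=
    exists_mem_and_two_mul_sub_mem (measurableSet_le hm measurable_const) (s := s)
    (hn.trans_le (measure_mono (inter_subset_inter_right _
      (closedBall_subset_closedBall' (by rw [dist_comm]; linarith)))))
  have hjt : 7 * l ≤ |j - t| := by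
    have htri := abs_sub_le t₀ t j
    rw [abs_sub_comm t₀ t, abs_sub_comm t j] at htri
    linarith [show |t₀ - j| = 8 * l by simp only [l]; ring]
  have hclose : |p - (2 * s - p)| ≤ |j - t| := by
    rw [Real.dist_eq] at hps
    rw [show p - (2 * s - p) = 2 * (p - s) by ring, abs_mul, abs_two]
    linarith
  have hmul := hΛ.mul_le_mul (by ring) hclose
  have hbound : Λ p * Λ (2 * s - p) ≤ n * n :=
    _root_.mul_le_mul hp hq (hΛ.nonneg _) (Nat.cast_nonneg n)
  rw [le_div_iff₀ hj]
  linarith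

theorem isBoundedUnder_nhds (hΛ : TotallyPositive₂ Λ) (hm : Measurable Λ) {u v : ℝ}
    (huv : u ≠ v) (hu : 0 < Λ u) (hv : 0 < Λ v) (x : ℝ) : (𝓝 x).IsBoundedUnder (· ≤ ·) Λ := by
  rcases ne_or_eq x u with hxu | rfl
  · exact hΛ.isBoundedUnder_nhds_of_pos hm hu hxu
  · exact hΛ.isBoundedUnder_nhds_of_pos hm hv huv

theorem locallyIntegrable (hΛ : TotallyPositive₂ Λ) (hm : Measurable Λ)
    (hloc : ∀ x, (𝓝 x).IsBoundedUnder (· ≤ ·) Λ) : LocallyIntegrable Λ := fun x =>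
  (Measure.finiteAt_nhds volume x).integrableAtFilter
    hm.stronglyMeasurable.stronglyMeasurableAtFilter
    (by simpa only [Function.comp_def, Real.norm_of_nonneg (hΛ.nonneg _)] using hloc x)

/-- Comparing the pairs `u, y + h` and `v, y` gives `Λ (y + h) ≤ e^{κ h} Λ y` for `y ≥ v`, where
`h = v - u`; so `e^{-κ t} Λ t` does not increase over a step `h` and is bounded by its values on
`[v, v + h]`. -/
theorem isBigO_exp_atTop (hΛ : TotallyPositive₂ Λ) (hloc : ∀ x, (𝓝 x).IsBoundedUnder (· ≤ ·) Λ)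
    {u v κ : ℝ} (huv : u < v) (hu : 0 < Λ u) (hκ : Λ v ≤ Real.exp (κ * (v - u)) * Λ u) :
    Λ =O[atTop] fun t => Real.exp (κ * t) := by
  set h := v - u
  set g := fun t => Real.exp (-κ * t) * Λ t
  have hstep : ∀ y, v ≤ y → g (y + h) ≤ g y := by
    intro y hy
    have hmul : Λ u * Λ (y + h) ≤ Λ v * Λ y :=
      hΛ.mul_le_mul (by ring) (by
        rw [abs_of_nonpos (by linarith), abs_of_neg (by linarith)]
        linarith)
    have hratio : Λ (y + h) ≤ Real.exp (κ * h) * Λ y := by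
      refine le_of_mul_le_mul_left ?_ hu
      calc Λ u * Λ (y + h) ≤ Λ v * Λ y := hmul
        _ ≤ Real.exp (κ * h) * Λ u * Λ y := mul_le_mul_of_nonneg_right hκ (hΛ.nonneg y)
        _ = Λ u * (Real.exp (κ * h) * Λ y) := by ring
    calc g (y + h) ≤ Real.exp (-κ * (y + h)) * (Real.exp (κ * h) * Λ y) :=
          mul_le_mul_of_nonneg_left hratio (Real.exp_pos _).le
      _ = g y := by
          simp only [g]
          rw [← mul_assoc, ← Real.exp_add]
          ring_nf
  obtain ⟨M, hM⟩ := (isCompact_Icc (a := v) (b := v + h)).bddAbove_image_of_isBoundedUnder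
    fun x _ => hloc x
  obtain ⟨K, hK⟩ := (isCompact_Icc (a := v) (b := v + h)).bddAbove_image
    (f := fun t => Real.exp (-κ * t)) (by fun_prop)
  have hg : ∀ t, v ≤ t → g t ≤ K * M := fun t ht =>
    le_of_map_add_le (by linarith) hstep (fun y hy => by
      have hKy := hK (mem_image_of_mem _ (Ico_subset_Icc_self hy))
      exact _root_.mul_le_mul hKy (hM (mem_image_of_mem _ (Ico_subset_Icc_self hy)))
        (hΛ.nonneg y) ((Real.exp_pos _).le.trans hKy)) ht
  refine IsBigO.of_bound (K * M) ((eventually_ge_atTop v).mono fun t ht => ?_)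
  rw [Real.norm_of_nonneg (hΛ.nonneg t), Real.norm_of_nonneg (Real.exp_pos _).le]
  calc Λ t = Real.exp (κ * t) * g t := by
        rw [← mul_assoc, ← Real.exp_add, show κ * t + -κ * t = 0 by ring, Real.exp_zero, one_mul]
    _ ≤ Real.exp (κ * t) * (K * M) := mul_le_mul_of_nonneg_left (hg t ht) (Real.exp_pos _).le
    _ = K * M * Real.exp (κ * t) := mul_comm _ _

theorem isBigO_exp_atBot (hΛ : TotallyPositive₂ Λ) (hloc : ∀ x, (𝓝 x).IsBoundedUnder (· ≤ ·) Λ)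
    {u v κ : ℝ} (huv : u < v) (hv : 0 < Λ v) (hκ : Real.exp (κ * (v - u)) * Λ u ≤ Λ v) :
    Λ =O[atBot] fun t => Real.exp (κ * t) := by
  have hloc' : ∀ x, (𝓝 x).IsBoundedUnder (· ≤ ·) fun t => Λ (-t) := fun x => by
    obtain ⟨M, hM⟩ := hloc (-x)
    exact ⟨M, (continuous_neg.tendsto x).eventually hM⟩
  have hκ' : Λ (-(-u)) ≤ Real.exp (-κ * (-u - -v)) * Λ (-(-v)) := by
    rw [neg_neg, neg_neg, show -κ * (-u - -v) = -(κ * (v - u)) by ring, Real.exp_neg]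
    rwa [le_inv_mul_iff₀ (Real.exp_pos _)]
  have hneg := hΛ.comp_neg.isBigO_exp_atTop hloc' (neg_lt_neg huv) (by rwa [neg_neg]) hκ'
  simpa [Function.comp_def] using hneg.comp_tendsto tendsto_neg_atBot_atTop

theorem exists_integrable_of_eventually_zero_atBot (hΛ : TotallyPositive₂ Λ) (hm : Measurable Λ)
    {u v : ℝ} (huv : u < v) (hu : 0 < Λ u) (hv : 0 < Λ v) (h0 : ∀ᶠ t in atBot, Λ t = 0) :
    ∃ c, Integrable fun t => Real.exp (c * t) * Λ t := by
  have hloc := hΛ.isBoundedUnder_nhds hm huv.ne hu hv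
  have htop := hΛ.isBigO_exp_atTop hloc huv hu (exp_logSlope_mul hu hv huv.ne).ge
  have hbot : Λ =O[atBot] fun t => Real.exp ((logSlope Λ u v + 2) * t) :=
    EventuallyEq.trans_isBigO h0 (isBigO_zero _ _)
  exact ⟨-logSlope Λ u v - 1, integrable_exp_mul_of_isBigO (hΛ.locallyIntegrable hm hloc)
    (by linarith) (by linarith) hbot htop⟩

theorem exists_integrable_of_eventually_zero_atTop (hΛ : TotallyPositive₂ Λ) (hm : Measurable Λ)
    {u v : ℝ} (huv : u < v) (hu : 0 < Λ u) (hv : 0 < Λ v) (h0 : ∀ᶠ t in atTop, Λ t = 0) :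
    ∃ c, Integrable fun t => Real.exp (c * t) * Λ t := by
  obtain ⟨c, hc⟩ := hΛ.comp_neg.exists_integrable_of_eventually_zero_atBot
    (hm.comp measurable_neg) (neg_lt_neg huv) (by rwa [neg_neg]) (by rwa [neg_neg])
    (tendsto_neg_atBot_atTop.eventually h0)
  exact ⟨-c, by simpa using hc.comp_neg⟩

theorem exists_integrable_of_mul_lt_mul (hΛ : TotallyPositive₂ Λ) (hm : Measurable Λ)
    (hpos : ∀ t, 0 < Λ t) {x y p q : ℝ} (hs : p + q = x + y) (hd : |p - q| ≤ |x - y|)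
    (hlt : Λ x * Λ y < Λ p * Λ q) : ∃ c, Integrable fun t => Real.exp (c * t) * Λ t := by
  wlog hxy : x ≤ y generalizing x y
  · exact this (x := y) (y := x) (by linarith) (by rwa [abs_sub_comm y x]) (by rwa [mul_comm])
      (by linarith)
  wlog hpq : p ≤ q generalizing p q
  · exact this (p := q) (q := p) (by linarith) (by rwa [abs_sub_comm q p])
      (by rwa [mul_comm (Λ q)]) (by linarith)
  rw [abs_of_nonpos (by linarith), abs_of_nonpos (by linarith)] at hd
  have hxp : x < p := by
    refine (show x ≤ p by linarith).lt_of_ne fun hxp => ?_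
    rw [← hxp, show q = y by linarith] at hlt
    exact hlt.false
  have hyq : y - q = p - x := by linarith
  have hslope : logSlope Λ q y < logSlope Λ x p := by
    rw [logSlope, logSlope, hyq]
    refine div_lt_div_of_pos_right (Real.log_lt_log (div_pos (hpos y) (hpos q)) ?_) (by linarith)
    rw [div_lt_div_iff₀ (hpos q) (hpos x)]
    linarith
  have hloc := hΛ.isBoundedUnder_nhds hm zero_ne_one (hpos 0) (hpos 1)
  exact ⟨-(logSlope Λ x p + logSlope Λ q y) / 2,
    integrable_exp_mul_of_isBigO (hΛ.locallyIntegrable hm hloc) (by linarith) (by linarith)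
      (hΛ.isBigO_exp_atBot hloc hxp (hpos p) (exp_logSlope_mul (hpos x) (hpos p) hxp.ne).le)
      (hΛ.isBigO_exp_atTop hloc (by linarith) (hpos q)
        (exp_logSlope_mul (hpos q) (hpos y) (by linarith : q < y).ne).ge)⟩

theorem exists_integrable_exp_mul (hΛ : TotallyPositive₂ Λ) (hm : Measurable Λ) {u v : ℝ}
    (huv : u < v) (hu : 0 < Λ u) (hv : 0 < Λ v)
    (hnexp : ¬ ∃ a b : ℝ, ∀ x : ℝ, Λ x = Real.exp (a * x + b)) :
    ∃ c, Integrable fun t => Real.exp (c * t) * Λ t := by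
  by_cases hbot : ∀ᶠ t in atBot, Λ t = 0
  · exact hΛ.exists_integrable_of_eventually_zero_atBot hm huv hu hv hbot
  by_cases htop : ∀ᶠ t in atTop, Λ t = 0
  · exact hΛ.exists_integrable_of_eventually_zero_atTop hm huv hu hv htop
  have hpos := hΛ.pos_of_frequently (not_eventually.1 hbot) (not_eventually.1 htop)
  by_cases hgap : ∃ x y p q, p + q = x + y ∧ |p - q| ≤ |x - y| ∧ Λ x * Λ y < Λ p * Λ q
  · obtain ⟨x, y, p, q, hs, hd, hlt⟩ := hgap
    exact hΛ.exists_integrable_of_mul_lt_mul hm hpos hs hd hlt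
  simp only [not_exists, not_and, not_lt] at hgap
  exact absurd (exists_eq_exp_of_map_add_mul_map_zero hm hpos fun a b =>
    hΛ.mul_eq_mul_of_forall_le hgap (by ring)) hnexp

end TotallyPositive₂

/-- A totally positive function which is not a.e. zero and not a pure exponential becomes
integrable (hence a Pólya frequency function) after multiplication by a suitable
exponential `e^{cx}`. -/
theorem exists_exponential_mul_polyaFrequency (Λ : ℝ → ℝ) (hTP : TotallyPositive Λ)
    (hne : ¬ (∀ᵐ x : ℝ, Λ x = 0))
    (hnexp : ¬ ∃ a b : ℝ, ∀ x : ℝ, Λ x = Real.exp (a * x + b)) :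
    ∃ c : ℝ, PolyaFrequency (fun x => Real.exp (c * x) * Λ x) := by
  have hΛ := hTP.totallyPositive₂
  obtain ⟨u, v, huv, hu, hv⟩ := exists_lt_ne_zero_of_not_ae_eq_zero hne
  obtain ⟨c, hc⟩ := hΛ.exists_integrable_exp_mul hTP.1 huv ((hΛ.nonneg u).lt_of_ne' hu)
    ((hΛ.nonneg v).lt_of_ne' hv) hnexp
  exact ⟨c, hTP.exp_mul c, hc, by simpa [Real.exp_ne_zero] using hne⟩
end

section
/- If Λ₁ and Λ₂ are Pólya frequency functions, then their convolution Λ(x) = ∫_{-∞}^{∞} Λ₁(x − t) Λ₂(t) dt is again a Pólya frequency function. -/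
open MeasureTheory Complex

/-!
A totally positive function is nonnegative (1 × 1 minors) and midpoint log-concave (2 × 2 minors);
together with integrability and nontriviality this makes a Pólya frequency function bounded, so
every integral `∫ Λ₁ (x - t) * Λ₂ (t - y)` converges. The continuous Cauchy–Binet formula
(basic composition formula)
`n! · det [(Λ₁ ⋆ Λ₂) (x j - y k)] = ∫ det [Λ₁ (x j - s k)] · det [Λ₂ (s j - y k)] ds`
then gives total positivity: sorting `s` changes the sign of both determinants on the right in the
same way, and for increasing `s` they are minors of `Λ₁` and `Λ₂`. Finally
`∫ (Λ₁ ⋆ Λ₂) = ∫ Λ₁ · ∫ Λ₂ > 0`.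
-/

open Matrix Equiv
open scoped Convolution

theorem Matrix.det_permute'_mul_det_permute {n R : Type*} [Fintype n] [DecidableEq n]
    [CommRing R] (A B : Matrix n n R) (σ : Perm n) :
    (A.submatrix id σ).det * (B.submatrix σ id).det = A.det * B.det := by
  rw [det_permute', det_permute]
  calc _ = ((Perm.sign σ * Perm.sign σ : ℤˣ) : R) * (A.det * B.det) := by push_cast; ring
    _ = A.det * B.det := by rw [Int.units_mul_self]; simp

namespace TotallyPositive

variable {Λ Λ₁ Λ₂ : ℝ → ℝ}

theorem nonneg_s5 (h : TotallyPositive Λ) (u : ℝ) : 0 ≤ Λ u := by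
  simpa using h.2 1 (fun _ => u) (fun _ => 0) (Subsingleton.strictMono _)
    (Subsingleton.strictMono _)

theorem mul_le_sq_midpoint (h : TotallyPositive Λ) (a b : ℝ) :
    Λ a * Λ b ≤ Λ ((a + b) / 2) ^ 2 := by
  wlog hab : a < b generalizing a b
  · rcases (not_lt.1 hab).eq_or_lt with rfl | hba
    · simp [sq]
    · simpa [mul_comm, add_comm] using this b a hba
  -- the 2 × 2 minor `!![Λ m, Λ a; Λ b, Λ m]` with `m = (a + b) / 2`
  have hx : StrictMono ![0, (b - a) / 2] := by
    refine Fin.strictMono_iff_lt_succ.2 fun i => ?_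
    fin_cases i; simp; linarith
  have hy : StrictMono ![-((a + b) / 2), -a] := by
    refine Fin.strictMono_iff_lt_succ.2 fun i => ?_
    fin_cases i; simp; linarith
  have hdet := h.2 2 _ _ hx hy
  simp only [det_fin_two, of_apply, cons_val_zero, cons_val_one, cons_val_fin_one] at hdet
  ring_nf at hdet ⊢
  linarith

theorem det_mul_det_nonneg (h₁ : TotallyPositive Λ₁) (h₂ : TotallyPositive Λ₂) {n : ℕ}
    {x y : Fin n → ℝ} (hx : StrictMono x) (hy : StrictMono y) (s : Fin n → ℝ) :
    0 ≤ (of fun j k => Λ₁ (x j - s k)).det * (of fun j k => Λ₂ (s j - y k)).det := by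
  by_cases hs : Function.Injective s
  · have hsort : StrictMono (s ∘ Tuple.sort s) :=
      (Tuple.monotone_sort s).strictMono_of_injective (hs.comp (Tuple.sort s).injective)
    rw [← det_permute'_mul_det_permute _ _ (Tuple.sort s)]
    exact mul_nonneg (h₁.2 n x _ hx hsort) (h₂.2 n _ y hsort hy)
  · obtain ⟨j, k, hjk, hne⟩ := Function.not_injective_iff.1 hs
    rw [det_zero_of_column_eq hne fun i => by simp [hjk], zero_mul]

end TotallyPositive

theorem MeasureTheory.exists_pos_measure_setOf_le {α : Type*} [MeasurableSpace α]
    {μ : Measure α} {f : α → ℝ} (hf₀ : 0 ≤ f) (hf : ¬ ∀ᵐ x ∂μ, f x = 0) :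
    ∃ c > 0, 0 < μ {x | c ≤ f x} := by
  contrapose! hf
  have hnull : ∀ k : ℕ, μ {x | 1 / ((k : ℝ) + 1) ≤ f x} = 0 := fun k =>
    nonpos_iff_eq_zero.1 (hf _ Nat.one_div_pos_of_nat)
  refine measure_mono_null (fun x (hx : f x ≠ 0) => ?_) (measure_iUnion_null hnull)
  obtain ⟨k, hk⟩ := exists_nat_one_div_lt ((hf₀ x).lt_of_ne' hx)
  exact Set.mem_iUnion.2 ⟨k, hk.le⟩

theorem Real.volume_preimage_two_mul_sub (m : ℝ) (s : Set ℝ) :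
    volume ((fun u => 2 * u - m) ⁻¹' s) = volume s / 2 := by
  have : (fun u : ℝ => 2 * u - m) ⁻¹' s = (2 * ·) ⁻¹' ((· + -m) ⁻¹' s) := by
    simp only [sub_eq_add_neg]; rfl
  rw [this, Real.volume_preimage_mul_left two_ne_zero, measure_preimage_add_right,
    ENNReal.div_eq_inv_mul, abs_of_pos (by norm_num), ENNReal.ofReal_inv_of_pos two_pos,
    ENNReal.ofReal_ofNat]

theorem bddAbove_range_of_mul_le_sq_midpoint {f : ℝ → ℝ} (hf₀ : 0 ≤ f)
    (hf_mid : ∀ a b, f a * f b ≤ f ((a + b) / 2) ^ 2) (hf_meas : Measurable f)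
    (hf : Integrable f) (hf_ne : ¬ ∀ᵐ x, f x = 0) : BddAbove (Set.range f) := by
  obtain ⟨c, hc, hP⟩ := exists_pos_measure_setOf_le hf₀ hf_ne
  set P := {x | c ≤ f x}
  have hPfin : volume P < ⊤ := hf.measure_ge_lt_top hc
  set κ := volume.real P / 2
  have hκ : 0 < κ := half_pos (ENNReal.toReal_pos hP.ne' hPfin.ne)
  refine ⟨((∫ x, f x) / κ) ^ 2 / c, Set.forall_mem_range.2 fun m => ?_⟩
  set T := (fun u => 2 * u - m) ⁻¹' P
  have hT : volume T = volume P / 2 := Real.volume_preimage_two_mul_sub m P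
  have hTfin : volume T ≠ ⊤ := by rw [hT]; exact ENNReal.div_ne_top hPfin.ne two_ne_zero
  have hTmeas : MeasurableSet T :=
    measurableSet_le measurable_const (hf_meas.comp (by fun_prop))
  have hlower : ∀ u ∈ T, √(c * f m) ≤ f u := fun u hu => (Real.sqrt_le_left (hf₀ u)).2 <|
    calc c * f m ≤ f (2 * u - m) * f m := mul_le_mul_of_nonneg_right hu (hf₀ m)
      _ ≤ f u ^ 2 := by simpa using hf_mid (2 * u - m) m
  have hint : √(c * f m) * κ ≤ ∫ x, f x :=
    calc √(c * f m) * κ = √(c * f m) * volume.real T := by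
          simp [κ, Measure.real, hT, ENNReal.toReal_div]
      _ ≤ ∫ x in T, f x :=
          setIntegral_ge_of_const_le_real hTmeas hTfin hlower hf.integrableOn
      _ ≤ ∫ x, f x := setIntegral_le_integral hf (Filter.Eventually.of_forall hf₀)
  have hsq : c * f m ≤ ((∫ x, f x) / κ) ^ 2 :=
    (Real.sqrt_le_left (div_nonneg (integral_nonneg hf₀) hκ.le)).1 ((le_div_iff₀ hκ).2 hint)
  rw [le_div_iff₀ hc]
  linarith

section BasicComposition

theorem MeasurableEquiv.coe_piCongrLeft_perm_symm {ι α : Type*} [MeasurableSpace α]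
    (τ : Perm ι) : ⇑(MeasurableEquiv.piCongrLeft (fun _ : ι => α) τ.symm) = (· ∘ τ) := by
  ext s i
  simp [MeasurableEquiv.coe_piCongrLeft, Equiv.piCongrLeft_apply]

theorem Matrix.det_of_mul_prod_eq_sum {ι α R : Type*} [Fintype ι] [DecidableEq ι] [CommRing R]
    (A : ι → α → R) (B : α → ι → R) (s : ι → α) :
    (of fun j k => A j (s k)).det * ∏ i, B (s i) i =
      ∑ σ : Perm ι, (Perm.sign σ : R) * ∏ i, (A (σ i) (s i) * B (s i) i) := by
  simp only [det_apply', of_apply, Finset.sum_mul, mul_assoc, Finset.prod_mul_distrib]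

variable {ι α : Type*} [Fintype ι] [MeasurableSpace α] {μ : Measure α} [SigmaFinite μ]

theorem MeasureTheory.integral_comp_perm {E : Type*} [NormedAddCommGroup E] [NormedSpace ℝ E]
    (F : (ι → α) → E) (τ : Perm ι) :
    ∫ s, F (s ∘ τ) ∂Measure.pi (fun _ => μ) = ∫ s, F s ∂Measure.pi (fun _ => μ) := by
  simpa [MeasurableEquiv.coe_piCongrLeft_perm_symm] using
    (measurePreserving_piCongrLeft (fun _ : ι => μ) τ.symm).integral_comp' F

theorem MeasureTheory.Integrable.comp_perm {E : Type*} [NormedAddCommGroup E] {F : (ι → α) → E}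
    (hF : Integrable F (Measure.pi fun _ => μ)) (τ : Perm ι) :
    Integrable (fun s => F (s ∘ τ)) (Measure.pi fun _ => μ) := by
  have := ((measurePreserving_piCongrLeft (fun _ : ι => μ) τ.symm).integrable_comp_emb
    (MeasurableEquiv.measurableEmbedding _)).2 hF
  rwa [MeasurableEquiv.coe_piCongrLeft_perm_symm] at this

variable [DecidableEq ι] {A : ι → α → ℝ} {B : α → ι → ℝ}

theorem Matrix.integrable_det_of_mul_prod (h : ∀ j k, Integrable (fun t => A j t * B t k) μ) :
    Integrable (fun s => (of fun j k => A j (s k)).det * ∏ i, B (s i) i)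
      (Measure.pi fun _ => μ) := by
  simp_rw [det_of_mul_prod_eq_sum]
  exact integrable_finsetSum _ fun σ _ =>
    (Integrable.fintype_prod fun i => h (σ i) i).const_mul _

theorem Matrix.det_integral_mul_eq_integral_det_mul_prod
    (h : ∀ j k, Integrable (fun t => A j t * B t k) μ) :
    (of fun j k => ∫ t, A j t * B t k ∂μ).det =
      ∫ s, (of fun j k => A j (s k)).det * ∏ i, B (s i) i ∂Measure.pi fun _ => μ := by
  simp_rw [det_of_mul_prod_eq_sum]
  rw [integral_finsetSum _ fun σ _ =>
    (Integrable.fintype_prod fun i => h (σ i) i).const_mul _, det_apply']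
  refine Finset.sum_congr rfl fun σ _ => ?_
  rw [integral_const_mul, integral_fintype_prod_eq_prod (fun i t => A (σ i) t * B t i)]
  simp

theorem Matrix.card_perm_mul_det_integral_mul_eq_integral_det_mul_det
    (h : ∀ j k, Integrable (fun t => A j t * B t k) μ) :
    Fintype.card (Perm ι) * (of fun j k => ∫ t, A j t * B t k ∂μ).det =
      ∫ s, (of fun j k => A j (s k)).det * (of fun j k => B (s j) k).det
        ∂Measure.pi fun _ => μ := by
  set F := fun s : ι → α => (of fun j k => A j (s k)).det * ∏ i, B (s i) i
  -- symmetrizing `F` over permutations of the variables turns `∏ i, B (s i) i` into a determinant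
  have hsymm : ∀ s, ∑ τ : Perm ι, F (s ∘ τ) =
      (of fun j k => A j (s k)).det * (of fun j k => B (s j) k).det := by
    intro s
    have hperm : ∀ τ : Perm ι, F (s ∘ τ) = (of fun j k => A j (s k)).det *
        ((Perm.sign τ : ℝ) * ∏ i, B (s (τ i)) i) := fun τ => by
      simp only [F, Function.comp_apply]
      rw [show (of fun j k => A j (s (τ k))) = (of fun j k => A j (s k)).submatrix id τ from rfl,
        det_permute']
      ring
    simp only [hperm, ← Finset.mul_sum, det_apply', of_apply]
  calc (Fintype.card (Perm ι) : ℝ) * (of fun j k => ∫ t, A j t * B t k ∂μ).det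
      = ∑ τ : Perm ι, ∫ s, F (s ∘ τ) ∂Measure.pi fun _ => μ := by
        simp only [integral_comp_perm F, det_integral_mul_eq_integral_det_mul_prod h,
          Finset.sum_const, Finset.card_univ, nsmul_eq_mul, F]
    _ = _ := by
        rw [← integral_finsetSum _ fun τ _ => (integrable_det_of_mul_prod h).comp_perm τ]
        exact integral_congr_ae (ae_of_all _ hsymm)

end BasicComposition

namespace TotallyPositive

variable {Λ₁ Λ₂ : ℝ → ℝ}

theorem convolution (h₁ : TotallyPositive Λ₁) (h₂ : TotallyPositive Λ₂)
    (hΛ₁ : BddAbove (Set.range Λ₁)) (hΛ₂ : Integrable Λ₂) :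
    TotallyPositive fun x => ∫ t, Λ₁ (x - t) * Λ₂ t := by
  refine ⟨?_, fun n x y hx hy => ?_⟩
  · have h : StronglyMeasurable (Function.uncurry fun x t : ℝ => Λ₁ (x - t) * Λ₂ t) :=
      ((h₁.1.comp (measurable_fst.sub measurable_snd)).mul
        (h₂.1.comp measurable_snd)).stronglyMeasurable
    exact h.integral_prod_right.measurable
  obtain ⟨M, hM⟩ := hΛ₁
  have hint : ∀ j k, Integrable fun t => Λ₁ (x j - t) * Λ₂ (t - y k) := fun j k =>
    (hΛ₂.comp_sub_right (y k)).bdd_mul (h₁.1.comp (by fun_prop)).aestronglyMeasurable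
      (ae_of_all _ fun t => (Real.norm_of_nonneg (h₁.nonneg_s5 _)).trans_le (hM ⟨_, rfl⟩))
  have hentry : ∀ j k, ∫ t, Λ₁ (x j - y k - t) * Λ₂ t = ∫ t, Λ₁ (x j - t) * Λ₂ (t - y k) :=
    fun j k => by
      rw [← integral_sub_right_eq_self _ (y k)]
      simp only [sub_sub_sub_cancel_right]
  have hformula := card_perm_mul_det_integral_mul_eq_integral_det_mul_det hint
  simp only [← hentry] at hformula
  refine nonneg_of_mul_nonneg_right (hformula ▸ integral_nonneg fun s => ?_)
    (by exact_mod_cast Fintype.card_pos)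
  exact det_mul_det_nonneg h₁ h₂ hx hy s

end TotallyPositive

namespace PolyaFrequency

variable {Λ : ℝ → ℝ}

theorem bddAbove (h : PolyaFrequency Λ) : BddAbove (Set.range Λ) :=
  bddAbove_range_of_mul_le_sq_midpoint h.1.nonneg_s5 h.1.mul_le_sq_midpoint h.1.1 h.2.1 h.2.2

theorem integral_pos (h : PolyaFrequency Λ) : 0 < ∫ x, Λ x :=
  (integral_pos_iff_support_of_nonneg h.1.nonneg_s5 h.2.1).2
    (pos_iff_ne_zero.2 fun h0 => h.2.2 (ae_iff.2 h0))

end PolyaFrequency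

theorem integral_comp_sub_mul_eq_convolution (f g : ℝ → ℝ) :
    (fun x => ∫ t, f (x - t) * g t) = g ⋆[ContinuousLinearMap.mul ℝ ℝ] f := by
  funext x
  simp only [convolution_mul, mul_comm]

/-- The convolution of two Pólya frequency functions is a Pólya frequency function. -/
theorem polyaFrequency_convolution (Λ₁ Λ₂ : ℝ → ℝ)
    (h₁ : PolyaFrequency Λ₁) (h₂ : PolyaFrequency Λ₂) :
    PolyaFrequency (fun x => ∫ t : ℝ, Λ₁ (x - t) * Λ₂ t) := by
  have hconv := integral_comp_sub_mul_eq_convolution Λ₁ Λ₂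
  refine ⟨h₁.1.convolution h₂.1 h₁.bddAbove h₂.2.1,
    by rw [hconv]; exact h₂.2.1.integrable_convolution _ h₁.2.1, fun hzero => ?_⟩
  have hmass : ∫ x, ∫ t, Λ₁ (x - t) * Λ₂ t = (∫ x, Λ₂ x) * ∫ x, Λ₁ x := by
    rw [hconv, integral_convolution _ h₂.2.1 h₁.2.1]
    rfl
  rw [integral_eq_zero_of_ae hzero] at hmass
  exact (mul_pos h₂.integral_pos h₁.integral_pos).ne hmass
end

section
/- The logistic-type function Λ(x) = 1/(1 + e^{−x}) is totally positive, and its two-sided Laplace transform satisfies ∫_{-∞}^{∞} e^{−sx}/(1 + e^{−x}) dx = π / sin(πs) for all s ∈ ℂ with 0 < Re s < 1. -/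
open MeasureTheory Complex

/-!
Since `1 / (1 + e^{-(x - y)}) = e^x / (e^x + e^y)`, the kernel matrix is a positive diagonal
matrix times the Cauchy matrix `(1 / (a_j + b_k))` with increasing `a_j = e^{x_j}`,
`b_k = e^{y_k}`. Clearing the first column of a Cauchy matrix by row operations leaves the
Cauchy matrix of the remaining nodes, with rows and columns scaled by the nonnegative factors
`(a_i - a_0) / (a_i + b_0)` and `(b_k - b_0) / (a_0 + b_k)`; hence its determinant is
nonnegative by induction.

The substitution `u = 1 / (1 + e^{-x})` turns the Laplace transform into the Beta integral
`B(1 - s, s) = Γ(1 - s) Γ(s) = π / sin (π s)`.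
-/

open Set Real Matrix

section Cauchy

variable {K : Type*} [Field K]

def cauchyMatrix {m n : Type*} (a : m → K) (b : n → K) : Matrix m n K :=
  of fun i j => (a i + b j)⁻¹

lemma inv_add_sub_div_mul_inv_add {a a' b b' : K} (hab' : a + b' ≠ 0)
    (ha'b : a' + b ≠ 0) (ha'b' : a' + b' ≠ 0) :
    (a' + b')⁻¹ - (a + b) / (a' + b) * (a + b')⁻¹ =
      (a' - a) / (a' + b) * ((b' - b) / (a + b') * (a' + b')⁻¹) := by
  field_simp
  ring

theorem det_cauchyMatrix_succ {n : ℕ} (a b : Fin (n + 1) → K) (h : ∀ i j, a i + b j ≠ 0) :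
    (cauchyMatrix a b).det = (a 0 + b 0)⁻¹ *
      ((∏ i : Fin n, (a i.succ - a 0) / (a i.succ + b 0)) *
        ((∏ j : Fin n, (b j.succ - b 0) / (a 0 + b j.succ)) *
          (cauchyMatrix (a ∘ Fin.succ) (b ∘ Fin.succ)).det)) := by
  set C := cauchyMatrix a b
  set c : Fin (n + 1) → K := Fin.cons 0 fun i => -((a 0 + b 0) / (a i.succ + b 0))
  set B : Matrix (Fin (n + 1)) (Fin (n + 1)) K := of fun i j => C i j + c i * C 0 j
  have hB : B.det = C.det := det_eq_of_forall_row_eq_smul_add_const c 0 rfl fun _ _ => rfl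
  have hB_succ : ∀ (i : Fin n) j, B i.succ j =
      (a i.succ - a 0) / (a i.succ + b 0) * ((b j - b 0) / (a 0 + b j) * C i.succ j) :=
    fun i j => by
      simp only [B, c, of_apply, Fin.cons_succ, neg_mul, ← sub_eq_add_neg]
      exact inv_add_sub_div_mul_inv_add (h 0 j) (h i.succ 0) (h i.succ j)
  have hB_col : ∀ i : Fin n, B i.succ 0 = 0 := fun i => by simp [hB_succ]
  have hB_minor : B.submatrix Fin.succ Fin.succ =
      diagonal (fun i => (a i.succ - a 0) / (a i.succ + b 0)) *
        cauchyMatrix (a ∘ Fin.succ) (b ∘ Fin.succ) *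
          diagonal (fun j => (b j.succ - b 0) / (a 0 + b j.succ)) := by
    ext i j
    simp only [submatrix_apply, hB_succ, mul_diagonal, diagonal_mul]
    simp only [C, cauchyMatrix, of_apply, Function.comp_apply]
    ring
  have hB₀₀ : B 0 0 = (a 0 + b 0)⁻¹ := by simp [B, C, c, cauchyMatrix]
  rw [← hB, det_succ_column_zero, Fin.sum_univ_succ]
  simp only [hB_col, mul_zero, zero_mul, Finset.sum_const_zero, add_zero, Fin.succAbove_zero,
    hB_minor, det_mul, det_diagonal, hB₀₀, Fin.val_zero, pow_zero, one_mul]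
  ring

theorem det_cauchyMatrix_nonneg [LinearOrder K] [IsStrictOrderedRing K] {n : ℕ}
    {a b : Fin n → K} (ha : Monotone a) (hb : Monotone b) (hpos : ∀ i j, 0 < a i + b j) :
    0 ≤ (cauchyMatrix a b).det := by
  induction n with
  | zero => simp
  | succ n ih =>
    have hrows : ∀ i : Fin n, 0 ≤ (a i.succ - a 0) / (a i.succ + b 0) := fun i =>
      div_nonneg (sub_nonneg.2 (ha (Fin.zero_le _))) (hpos _ _).le
    have hcols : ∀ j : Fin n, 0 ≤ (b j.succ - b 0) / (a 0 + b j.succ) := fun j =>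
      div_nonneg (sub_nonneg.2 (hb (Fin.zero_le _))) (hpos _ _).le
    have hminor := ih (ha.comp Fin.strictMono_succ.monotone)
      (hb.comp Fin.strictMono_succ.monotone) fun i j => hpos _ _
    rw [det_cauchyMatrix_succ a b fun i j => (hpos i j).ne']
    exact mul_nonneg (inv_nonneg.2 (hpos 0 0).le) <|
      mul_nonneg (Finset.prod_nonneg fun i _ => hrows i) <|
        mul_nonneg (Finset.prod_nonneg fun j _ => hcols j) hminor

end Cauchy

lemma Real.sigmoid_sub (x y : ℝ) :
    sigmoid (x - y) = Real.exp x * (Real.exp x + Real.exp y)⁻¹ := by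
  rw [sigmoid_def, neg_sub, Real.exp_sub]
  field_simp

theorem totallyPositive_sigmoid : TotallyPositive sigmoid := by
  refine ⟨continuous_sigmoid.measurable, fun n x y hx hy => ?_⟩
  have hfactor : (of fun j k => sigmoid (x j - y k)) =
      of fun j k => Real.exp (x j) * cauchyMatrix (Real.exp ∘ x) (Real.exp ∘ y) j k := by
    ext j k
    simp [sigmoid_sub, cauchyMatrix]
  rw [hfactor, det_mul_column]
  exact mul_nonneg (Finset.prod_nonneg fun j _ => (Real.exp_pos _).le) <|
    det_cauchyMatrix_nonneg (Real.exp_monotone.comp hx.monotone)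
      (Real.exp_monotone.comp hy.monotone) fun j k => add_pos (Real.exp_pos _) (Real.exp_pos _)

lemma Complex.ofReal_exp_cpow (t : ℝ) (w : ℂ) :
    (Real.exp t : ℂ) ^ w = Complex.exp (t * w) := by
  rw [cpow_def_of_ne_zero (ofReal_ne_zero.2 (Real.exp_pos t).ne'),
    ← ofReal_log (Real.exp_pos t).le, Real.log_exp]

theorem setIntegral_Ioo_zero_one_eq_integral_sigmoid {E : Type*} [NormedAddCommGroup E]
    [NormedSpace ℝ E] (g : ℝ → E) :
    ∫ u in Ioo 0 1, g u = ∫ x, (sigmoid x * (1 - sigmoid x)) • g (sigmoid x) := by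
  rw [← range_sigmoid, ← image_univ,
    integral_image_eq_integral_abs_deriv_smul MeasurableSet.univ
      (fun x _ => (hasDerivAt_sigmoid x).hasDerivWithinAt) sigmoid_injective.injOn,
    setIntegral_univ]
  congr 1 with x
  rw [abs_of_pos (mul_pos (sigmoid_pos x) (sub_pos.2 (sigmoid_lt_one x)))]

theorem Complex.betaIntegral_eq_integral_exp_div_cpow (u v : ℂ) :
    betaIntegral u v =
      ∫ x : ℝ, Complex.exp (-v * x) / (1 + (Real.exp (-x) : ℂ)) ^ (u + v) := by
  rw [betaIntegral, intervalIntegral.integral_of_le zero_le_one, integral_Ioc_eq_integral_Ioo,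
    setIntegral_Ioo_zero_one_eq_integral_sigmoid]
  congr 1 with x
  set L := Real.log (1 + Real.exp (-x))
  have hL : 1 + Real.exp (-x) = Real.exp L := (Real.exp_log (by positivity)).symm
  have hσ : sigmoid x = Real.exp (-L) := by rw [sigmoid_def, hL, Real.exp_neg]
  have hσ' : 1 - sigmoid x = Real.exp (-x - L) := by
    rw [← sigmoid_neg, ← sigmoid_mul_rexp_neg, hσ, ← Real.exp_add, add_comm, sub_eq_add_neg]
  have hσ'C : 1 - (sigmoid x : ℂ) = (Real.exp (-x - L) : ℂ) := by exact_mod_cast hσ'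
  have hLC : 1 + (Real.exp (-x) : ℂ) = (Real.exp L : ℂ) := by exact_mod_cast hL
  rw [hσ'C, hLC, real_smul, hσ', hσ, ofReal_exp_cpow, ofReal_exp_cpow, ofReal_exp_cpow,
    div_eq_mul_inv, ← Complex.exp_neg]
  push_cast
  simp only [← Complex.exp_add]
  ring_nf

theorem integral_exp_div_one_add_exp {s : ℂ} (hs₀ : 0 < s.re) (hs₁ : s.re < 1) :
    ∫ x : ℝ, Complex.exp (-s * x) / (1 + (Real.exp (-x) : ℂ)) =
      (Real.pi : ℂ) / Complex.sin (Real.pi * s) := by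
  have h₁ : 0 < (1 - s).re := by simpa using hs₁
  have hbeta := betaIntegral_eq_integral_exp_div_cpow (1 - s) s
  simp only [sub_add_cancel, cpow_one] at hbeta
  rw [betaIntegral_eq_Gamma_mul_div _ _ h₁ hs₀, sub_add_cancel, Complex.Gamma_one, div_one,
    mul_comm, Complex.Gamma_mul_Gamma_one_sub] at hbeta
  exact hbeta.symm

/-- The logistic-type function `x ↦ 1/(1 + e^{-x})` is totally positive and its two-sided
Laplace transform equals `π / sin(π s)` for `0 < Re s < 1`. -/
theorem logistic_totallyPositive :
    TotallyPositive (fun x : ℝ => 1 / (1 + Real.exp (-x))) ∧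
    ∀ s : ℂ, 0 < s.re → s.re < 1 →
      ∫ x : ℝ, Complex.exp (-s * x) / (1 + (Real.exp (-x) : ℂ)) =
        (Real.pi : ℂ) / Complex.sin (Real.pi * s) := by
  have hσ : (fun x : ℝ => 1 / (1 + Real.exp (-x))) = sigmoid := funext fun x => one_div _
  exact ⟨hσ ▸ totallyPositive_sigmoid, fun _ => integral_exp_div_one_add_exp⟩
end
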